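/- arXiv:1210.7445 — 4 statements merged into one kernel-verified Lean document; each statement's English description precedes it below -/
import Mathlib

section
/- In the G/G/1 queue, each departure time D_k, viewed as a function of the vector of service times (τ_1, …, τ_k), is convex: for sequences τ, τ' and λ ∈ [0,1], D_k(λτ + (1-λ)τ') ≤ λ D_k(τ) + (1-λ) D_k(τ'). -/
open Set

/-! Induction on `k`: the recursion step `x ↦ max (A (k + 1)) x + s` is monotone and convex in
`x` and affine in the service time `s`, so it carries the convexity bound from `k` to `k + 1`. -/

theorem max_const_mix_le {𝕜 : Type*} [Field 𝕜] [LinearOrder 𝕜] [IsStrictOrderedRing 𝕜]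
    {t : 𝕜} (a x y : 𝕜) (ht0 : 0 ≤ t) (ht1 : t ≤ 1) :
    max a (t * x + (1 - t) * y) ≤ t * max a x + (1 - t) * max a y :=
  ((convexOn_const a convex_univ).sup (convexOn_id convex_univ)).2 (mem_univ x) (mem_univ y) ht0
    (sub_nonneg.2 ht1) (add_sub_cancel t 1)

/-- G/G/1 queue: each departure time is a convex function of the vector of
service times: `D_k (λ•τ + (1-λ)•τ') ≤ λ * D_k τ + (1-λ) * D_k τ'`. -/
theorem stmt_3 (A τ τ' D D' Dm : ℕ → ℝ) (lam : ℝ)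
    (hlam0 : 0 ≤ lam) (hlam1 : lam ≤ 1)
    (hD0 : D 0 = 0) (hD'0 : D' 0 = 0) (hDm0 : Dm 0 = 0)
    (hD : ∀ k, D (k + 1) = max (A (k + 1)) (D k) + τ (k + 1))
    (hD' : ∀ k, D' (k + 1) = max (A (k + 1)) (D' k) + τ' (k + 1))
    (hDm : ∀ k, Dm (k + 1) = max (A (k + 1)) (Dm k)
      + (lam * τ (k + 1) + (1 - lam) * τ' (k + 1))) :
    ∀ k, Dm k ≤ lam * D k + (1 - lam) * D' k := by
  intro k
  induction k with
  | zero => simp [hD0, hD'0, hDm0]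
  | succ n ih =>
    set s := lam * τ (n + 1) + (1 - lam) * τ' (n + 1)
    calc Dm (n + 1) = max (A (n + 1)) (Dm n) + s := hDm n
      _ ≤ max (A (n + 1)) (lam * D n + (1 - lam) * D' n) + s := by gcongr
      _ ≤ lam * max (A (n + 1)) (D n) + (1 - lam) * max (A (n + 1)) (D' n) + s := by
        gcongr
        exact max_const_mix_le _ _ _ hlam0 hlam1
      _ = lam * D (n + 1) + (1 - lam) * D' (n + 1) := by rw [hD, hD']; ring
end

section
/- For the tandem system with finite buffers, every departure time under manufacturing blocking is less than or equal to the corresponding departure time under communication blocking (with the same arrivals, service times, and buffer capacities): D_k^{n,manuf} ≤ D_k^{n,comm} for all k, n. -/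
/-- Tandem system with finite buffers `B` under manufacturing blocking
(terms with nonpositive index are taken to be `0`, which is the value of all
departure times at index `0`). -/
def MfgBlock (N : ℕ) (A : ℕ → ℝ) (τ : ℕ → ℕ → ℝ) (B : ℕ → ℕ)
    (D : ℕ → ℕ → ℝ) : Prop :=
  (∀ n, D 0 n = 0) ∧
  (∀ k, D (k + 1) 1 =
    max (max (A (k + 1)) (D k 1) + τ (k + 1) 1) (D (k + 1 - (B 2 + 1)) 2)) ∧
  (∀ k n, 2 ≤ n → n ≤ N - 1 → D (k + 1) n =
    max (max (D (k + 1) (n - 1)) (D k n) + τ (k + 1) n)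
      (D (k + 1 - (B (n + 1) + 1)) (n + 1))) ∧
  (∀ k, D (k + 1) N = max (D (k + 1) (N - 1)) (D k N) + τ (k + 1) N)

/-- Tandem system with finite buffers `B` under communication blocking. -/
def CommBlock (N : ℕ) (A : ℕ → ℝ) (τ : ℕ → ℕ → ℝ) (B : ℕ → ℕ)
    (D : ℕ → ℕ → ℝ) : Prop :=
  (∀ n, D 0 n = 0) ∧
  (∀ k, D (k + 1) 1 =
    max (max (A (k + 1)) (D k 1)) (D (k + 1 - (B 2 + 1)) 2) + τ (k + 1) 1) ∧
  (∀ k n, 2 ≤ n → n ≤ N - 1 → D (k + 1) n =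
    max (max (D (k + 1) (n - 1)) (D k n)) (D (k + 1 - (B (n + 1) + 1)) (n + 1))
      + τ (k + 1) n) ∧
  (∀ k, D (k + 1) N = max (D (k + 1) (N - 1)) (D k N) + τ (k + 1) N)

/-!
Under manufacturing blocking a job is served as soon as it may start and only its departure waits
for downstream space, whereas under communication blocking the start of service itself waits.
Since `max (x + τ) c ≤ max x c + τ` for `τ ≥ 0`, and both recursions are monotone, induction
over customers `k` and, for fixed `k`, over stations `n` gives the comparison: each recursion
only refers to earlier customers or to the previous station of the same customer.
-/

lemma max_add_le_max_add {α : Type*} [AddCommMonoid α] [LinearOrder α] [IsOrderedAddMonoid α]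
    {x x' c c' t : α} (ht : 0 ≤ t) (hx : x ≤ x') (hc : c ≤ c') :
    max (x + t) c ≤ max x' c' + t :=
  max_le (add_le_add_left (hx.trans (le_max_left _ _)) t)
    (hc.trans ((le_max_right _ _).trans (le_add_of_nonneg_right ht)))

section Comparison

variable {N : ℕ} {A : ℕ → ℝ} {τ : ℕ → ℕ → ℝ} {B : ℕ → ℕ} {Dm Dc : ℕ → ℕ → ℝ}

lemma MfgBlock.le_commBlock_succ (hN : 2 ≤ N) (hτ : ∀ k n, 0 ≤ τ k n)
    (hDm : MfgBlock N A τ B Dm) (hDc : CommBlock N A τ B Dc) (k : ℕ)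
    (IH : ∀ j ≤ k, ∀ n, 1 ≤ n → n ≤ N → Dm j n ≤ Dc j n) :
    ∀ n, 1 ≤ n → n ≤ N → Dm (k + 1) n ≤ Dc (k + 1) n := by
  obtain ⟨-, hm1, hmn, hmN⟩ := hDm
  obtain ⟨-, hc1, hcn, hcN⟩ := hDc
  have IH_blocking : ∀ m, 2 ≤ m → m ≤ N →
      Dm (k + 1 - (B m + 1)) m ≤ Dc (k + 1 - (B m + 1)) m :=
    fun m hm2 hmN' => IH _ (by omega) m (by omega) hmN'
  intro n h1
  induction n, h1 using Nat.le_induction with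
  | base =>
    intro _
    rw [hm1, hc1]
    exact max_add_le_max_add (hτ _ _) (max_le_max le_rfl (IH k le_rfl 1 le_rfl (by omega)))
      (IH_blocking 2 le_rfl hN)
  | succ n h1 IHn =>
    intro hn
    have hprev := IHn (by omega)
    rcases hn.eq_or_lt with rfl | hlt
    · rw [hmN, hcN, Nat.add_sub_cancel]
      exact add_le_add_left (max_le_max hprev (IH k le_rfl _ (by omega) le_rfl)) _
    · rw [hmn k (n + 1) (by omega) (by omega), hcn k (n + 1) (by omega) (by omega),
        Nat.add_sub_cancel]
      exact max_add_le_max_add (hτ _ _) (max_le_max hprev (IH k le_rfl _ (by omega) hn))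
        (IH_blocking (n + 2) (by omega) hlt)

end Comparison

theorem stmt_10_general (N : ℕ) (hN : 2 ≤ N) (A : ℕ → ℝ) (τ : ℕ → ℕ → ℝ) (B : ℕ → ℕ)
    (hτ : ∀ k n, 0 ≤ τ k n)
    (Dm Dc : ℕ → ℕ → ℝ)
    (hDm : MfgBlock N A τ B Dm) (hDc : CommBlock N A τ B Dc) :
    ∀ k n, 1 ≤ n → n ≤ N → Dm k n ≤ Dc k n := by
  intro k
  induction k using Nat.strong_induction_on with
  | _ k IH =>
    cases k with
    | zero => intro n _ _; rw [hDm.1, hDc.1]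
    | succ k =>
      exact hDm.le_commBlock_succ hN hτ hDc k fun j hj => IH j (Nat.lt_succ_of_le hj)

/-- With the same arrivals, service times and buffer capacities, every departure
time under manufacturing blocking is at most the one under communication
blocking. -/
theorem stmt_10 (N : ℕ) (hN : 2 ≤ N) (A : ℕ → ℝ) (τ : ℕ → ℕ → ℝ) (B : ℕ → ℕ)
    (hAmono : Monotone A) (hA0 : ∀ k, 0 ≤ A k) (hτ : ∀ k n, 0 ≤ τ k n)
    (Dm Dc : ℕ → ℕ → ℝ)
    (hDm : MfgBlock N A τ B Dm) (hDc : CommBlock N A τ B Dc) :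
    ∀ k n, 1 ≤ n → n ≤ N → Dm k n ≤ Dc k n :=
  stmt_10_general N hN A τ B hτ Dm Dc hDm hDc
end

section
/- For the tandem system with finite buffers and manufacturing blocking, every departure time is greater than or equal to the corresponding departure time in the infinite-buffer system: D_k^{n,manuf} ≥ D_k^{n,∞}. -/
/-- The same tandem system with all buffers infinite. -/
def InfBuf (N : ℕ) (A : ℕ → ℝ) (τ : ℕ → ℕ → ℝ) (D : ℕ → ℕ → ℝ) : Prop :=
  (∀ n, D 0 n = 0) ∧
  (∀ k, D (k + 1) 1 = max (A (k + 1)) (D k 1) + τ (k + 1) 1) ∧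
  (∀ k n, 2 ≤ n → n ≤ N →
    D (k + 1) n = max (D (k + 1) (n - 1)) (D k n) + τ (k + 1) n)

/-! Blocking only adds the term `D_{k-B_{n+1}-1}^{n+1}` under an outer `max`, so the
manufacturing-blocking departure times satisfy the infinite-buffer recursion with `≤` in place
of `=`. The infinite-buffer times are the least such supersolution, by induction on the customer
and, inside it, on the station. -/

section

variable {N : ℕ} {A : ℕ → ℝ} {τ : ℕ → ℕ → ℝ}

theorem MfgBlock.max_arrival_add_le {B : ℕ → ℕ} {D : ℕ → ℕ → ℝ} (h : MfgBlock N A τ B D)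
    (k : ℕ) : max (A (k + 1)) (D k 1) + τ (k + 1) 1 ≤ D (k + 1) 1 := by
  rw [h.2.1 k]
  exact le_max_left _ _

theorem MfgBlock.max_upstream_add_le {B : ℕ → ℕ} {D : ℕ → ℕ → ℝ} (h : MfgBlock N A τ B D)
    (k n : ℕ) (hn2 : 2 ≤ n) (hnN : n ≤ N) :
    max (D (k + 1) (n - 1)) (D k n) + τ (k + 1) n ≤ D (k + 1) n := by
  rcases hnN.lt_or_eq with hlt | rfl
  · rw [h.2.2.1 k n hn2 (by omega)]
    exact le_max_left _ _
  · exact (h.2.2.2 k).ge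

theorem InfBuf.le_of_supersolution {D E : ℕ → ℕ → ℝ} (hD : InfBuf N A τ D)
    (hE0 : ∀ n, D 0 n ≤ E 0 n)
    (hE1 : ∀ k, max (A (k + 1)) (E k 1) + τ (k + 1) 1 ≤ E (k + 1) 1)
    (hEn : ∀ k n, 2 ≤ n → n ≤ N → max (E (k + 1) (n - 1)) (E k n) + τ (k + 1) n ≤ E (k + 1) n) :
    ∀ k n, 1 ≤ n → n ≤ N → D k n ≤ E k n := by
  obtain ⟨-, hD1, hDn⟩ := hD
  intro k
  induction k with
  | zero => exact fun n _ _ ↦ hE0 n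
  | succ k ih =>
    intro n hn1
    induction n, hn1 using Nat.le_induction with
    | base =>
      intro hN
      calc D (k + 1) 1 = max (A (k + 1)) (D k 1) + τ (k + 1) 1 := hD1 k
        _ ≤ max (A (k + 1)) (E k 1) + τ (k + 1) 1 := by gcongr; exact ih 1 le_rfl hN
        _ ≤ E (k + 1) 1 := hE1 k
    | succ n hn1 ihn =>
      intro hnN
      calc D (k + 1) (n + 1) = max (D (k + 1) n) (D k (n + 1)) + τ (k + 1) (n + 1) :=
            hDn k (n + 1) (by omega) hnN
        _ ≤ max (E (k + 1) n) (E k (n + 1)) + τ (k + 1) (n + 1) := by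
            gcongr
            exacts [ihn (by omega), ih (n + 1) (by omega) hnN]
        _ ≤ E (k + 1) (n + 1) := hEn k (n + 1) (by omega) hnN

end

theorem stmt_11_general (N : ℕ) (A : ℕ → ℝ) (τ : ℕ → ℕ → ℝ) (B : ℕ → ℕ)
    (Dm Di : ℕ → ℕ → ℝ)
    (hDm : MfgBlock N A τ B Dm) (hDi : InfBuf N A τ Di) :
    ∀ k n, 1 ≤ n → n ≤ N → Di k n ≤ Dm k n :=
  hDi.le_of_supersolution (fun n ↦ ((hDi.1 n).trans (hDm.1 n).symm).le)
    hDm.max_arrival_add_le hDm.max_upstream_add_le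

/-- Every departure time under manufacturing blocking is at least the
corresponding departure time in the infinite-buffer system. -/
theorem stmt_11 (N : ℕ) (hN : 2 ≤ N) (A : ℕ → ℝ) (τ : ℕ → ℕ → ℝ) (B : ℕ → ℕ)
    (hAmono : Monotone A) (hA0 : ∀ k, 0 ≤ A k) (hτ : ∀ k n, 0 ≤ τ k n)
    (Dm Di : ℕ → ℕ → ℝ)
    (hDm : MfgBlock N A τ B Dm) (hDi : InfBuf N A τ Di) :
    ∀ k n, 1 ≤ n → n ≤ N → Di k n ≤ Dm k n :=
  stmt_11_general N A τ B Dm Di hDm hDi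
end

section
/- In the tandem system with finite buffers (either manufacturing or communication blocking), departure times are monotone nondecreasing functions of buffer capacities: if B_n ≤ B'_n for all n, then every departure time computed with capacities B' is less than or equal to the one computed with capacities B. Equivalently, enlarging buffers can only decrease (weakly) the departure times. -/
/-!
Induct on the pair (customer `k`, station `n`) in lexicographic order. The right-hand side of
either recursion is monotone in the departure times it refers to, all of which come earlier in
that order. The only term that involves the buffers is the blocking term
`D (k + 1 - (B (n + 1) + 1)) (n + 1)`: a larger buffer points to an earlier customer, and since
`τ ≥ 0` departure times at a fixed station are nondecreasing in the customer index, that term can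
only get smaller.
-/

theorem station_induction {N : ℕ} {P : ℕ → ℕ → Prop} (h0 : ∀ n, P 0 n)
    (hstep : ∀ k n, 1 ≤ n → n ≤ N → (∀ j ≤ k, ∀ m, 1 ≤ m → m ≤ N → P j m) →
      (∀ m, 1 ≤ m → m < n → P (k + 1) m) → P (k + 1) n) :
    ∀ k n, 1 ≤ n → n ≤ N → P k n := by
  intro k
  induction k using Nat.strong_induction_on with
  | _ k ihk =>
    rcases k with _ | k
    · exact fun n _ _ => h0 n
    · intro n
      induction n using Nat.strong_induction_on with
      | _ n ihn =>
        intro hn1 hnN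
        exact hstep k n hn1 hnN (fun j hj => ihk j (by omega))
          (fun m hm1 hmn => ihn m hmn hm1 (by omega))

theorem blocked_departure_le {α : Type*} [Preorder α] {D D' : ℕ → ℕ → α} {k m b b' : ℕ}
    (hb : b ≤ b') (hmono : Monotone (D · m)) (hle : ∀ j ≤ k, D' j m ≤ D j m) :
    D' (k + 1 - (b' + 1)) m ≤ D (k + 1 - (b + 1)) m :=
  (hle _ (by omega)).trans (hmono (by omega))

namespace CommBlock

variable {N : ℕ} {A : ℕ → ℝ} {τ : ℕ → ℕ → ℝ} {B B' : ℕ → ℕ} {D D' : ℕ → ℕ → ℝ}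

theorem monotone_departure (hτ : ∀ k n, 0 ≤ τ k n) (hD : CommBlock N A τ B D) {n : ℕ}
    (hn1 : 1 ≤ n) (hnN : n ≤ N) : Monotone (D · n) := by
  obtain ⟨-, h1, hmid, hlast⟩ := hD
  refine monotone_nat_of_le_succ fun k => ?_
  have hτk := hτ (k + 1) n
  rcases (by omega : n = 1 ∨ n = N ∨ (2 ≤ n ∧ n ≤ N - 1)) with rfl | rfl | ⟨hn2, hnN'⟩
  · rw [h1]
    exact le_add_of_le_of_nonneg (le_max_of_le_left (le_max_right _ _)) hτk
  · rw [hlast]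
    exact le_add_of_le_of_nonneg (le_max_right _ _) hτk
  · rw [hmid k n hn2 hnN']
    exact le_add_of_le_of_nonneg (le_max_of_le_left (le_max_right _ _)) hτk

theorem departure_anti_buffer (hN : 2 ≤ N) (hτ : ∀ k n, 0 ≤ τ k n) (hB : ∀ n, B n ≤ B' n)
    (hD : CommBlock N A τ B D) (hD' : CommBlock N A τ B' D') :
    ∀ k n, 1 ≤ n → n ≤ N → D' k n ≤ D k n := by
  have hmono := fun n => monotone_departure hτ hD (n := n)
  obtain ⟨h0, h1, hmid, hlast⟩ := hD
  obtain ⟨h0', h1', hmid', hlast'⟩ := hD'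
  refine station_induction (fun n => ((h0' n).trans (h0 n).symm).le) ?_
  intro k n hn1 hnN ihk ihn
  have hblock : ∀ m, 1 ≤ m → m ≤ N →
      D' (k + 1 - (B' m + 1)) m ≤ D (k + 1 - (B m + 1)) m := fun m hm1 hmN =>
    blocked_departure_le (hB m) (hmono m hm1 hmN) fun j hj => ihk j hj m hm1 hmN
  rcases (by omega : n = 1 ∨ n = N ∨ (2 ≤ n ∧ n ≤ N - 1)) with rfl | rfl | ⟨hn2, hnN'⟩
  · rw [h1, h1']
    gcongr
    exacts [ihk k le_rfl 1 le_rfl hnN, hblock 2 (by omega) hN]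
  · rw [hlast, hlast']
    gcongr
    exacts [ihn (n - 1) (by omega) (by omega), ihk k le_rfl n hn1 le_rfl]
  · rw [hmid k n hn2 hnN', hmid' k n hn2 hnN']
    gcongr
    exacts [ihn (n - 1) (by omega) (by omega), ihk k le_rfl n hn1 hnN,
      hblock (n + 1) (by omega) (by omega)]

end CommBlock

namespace MfgBlock

variable {N : ℕ} {A : ℕ → ℝ} {τ : ℕ → ℕ → ℝ} {B B' : ℕ → ℕ} {D D' : ℕ → ℕ → ℝ}

theorem monotone_departure (hτ : ∀ k n, 0 ≤ τ k n) (hD : MfgBlock N A τ B D) {n : ℕ}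
    (hn1 : 1 ≤ n) (hnN : n ≤ N) : Monotone (D · n) := by
  obtain ⟨-, h1, hmid, hlast⟩ := hD
  refine monotone_nat_of_le_succ fun k => ?_
  have hτk := hτ (k + 1) n
  rcases (by omega : n = 1 ∨ n = N ∨ (2 ≤ n ∧ n ≤ N - 1)) with rfl | rfl | ⟨hn2, hnN'⟩
  · rw [h1]
    exact le_max_of_le_left (le_add_of_le_of_nonneg (le_max_right _ _) hτk)
  · rw [hlast]
    exact le_add_of_le_of_nonneg (le_max_right _ _) hτk
  · rw [hmid k n hn2 hnN']
    exact le_max_of_le_left (le_add_of_le_of_nonneg (le_max_right _ _) hτk)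

theorem departure_anti_buffer (hN : 2 ≤ N) (hτ : ∀ k n, 0 ≤ τ k n) (hB : ∀ n, B n ≤ B' n)
    (hD : MfgBlock N A τ B D) (hD' : MfgBlock N A τ B' D') :
    ∀ k n, 1 ≤ n → n ≤ N → D' k n ≤ D k n := by
  have hmono := fun n => monotone_departure hτ hD (n := n)
  obtain ⟨h0, h1, hmid, hlast⟩ := hD
  obtain ⟨h0', h1', hmid', hlast'⟩ := hD'
  refine station_induction (fun n => ((h0' n).trans (h0 n).symm).le) ?_
  intro k n hn1 hnN ihk ihn
  have hblock : ∀ m, 1 ≤ m → m ≤ N →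
      D' (k + 1 - (B' m + 1)) m ≤ D (k + 1 - (B m + 1)) m := fun m hm1 hmN =>
    blocked_departure_le (hB m) (hmono m hm1 hmN) fun j hj => ihk j hj m hm1 hmN
  rcases (by omega : n = 1 ∨ n = N ∨ (2 ≤ n ∧ n ≤ N - 1)) with rfl | rfl | ⟨hn2, hnN'⟩
  · rw [h1, h1']
    gcongr
    exacts [ihk k le_rfl 1 le_rfl hnN, hblock 2 (by omega) hN]
  · rw [hlast, hlast']
    gcongr
    exacts [ihn (n - 1) (by omega) (by omega), ihk k le_rfl n hn1 le_rfl]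
  · rw [hmid k n hn2 hnN', hmid' k n hn2 hnN']
    gcongr
    exacts [ihn (n - 1) (by omega) (by omega), ihk k le_rfl n hn1 hnN,
      hblock (n + 1) (by omega) (by omega)]

end MfgBlock

theorem stmt_12_general (N : ℕ) (hN : 2 ≤ N) (A : ℕ → ℝ) (τ : ℕ → ℕ → ℝ)
    (B B' : ℕ → ℕ) (hB : ∀ n, B n ≤ B' n)
    (hτ : ∀ k n, 0 ≤ τ k n)
    (Dc Dc' Dm Dm' : ℕ → ℕ → ℝ)
    (hDc : CommBlock N A τ B Dc) (hDc' : CommBlock N A τ B' Dc')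
    (hDm : MfgBlock N A τ B Dm) (hDm' : MfgBlock N A τ B' Dm') :
    (∀ k n, 1 ≤ n → n ≤ N → Dc' k n ≤ Dc k n) ∧
    (∀ k n, 1 ≤ n → n ≤ N → Dm' k n ≤ Dm k n) :=
  ⟨CommBlock.departure_anti_buffer hN hτ hB hDc hDc',
    MfgBlock.departure_anti_buffer hN hτ hB hDm hDm'⟩

/-- Enlarging the buffers (componentwise `B ≤ B'`) can only decrease (weakly)
all departure times, under either communication or manufacturing blocking. -/
theorem stmt_12 (N : ℕ) (hN : 2 ≤ N) (A : ℕ → ℝ) (τ : ℕ → ℕ → ℝ)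
    (B B' : ℕ → ℕ) (hB : ∀ n, B n ≤ B' n)
    (hAmono : Monotone A) (hA0 : ∀ k, 0 ≤ A k) (hτ : ∀ k n, 0 ≤ τ k n)
    (Dc Dc' Dm Dm' : ℕ → ℕ → ℝ)
    (hDc : CommBlock N A τ B Dc) (hDc' : CommBlock N A τ B' Dc')
    (hDm : MfgBlock N A τ B Dm) (hDm' : MfgBlock N A τ B' Dm') :
    (∀ k n, 1 ≤ n → n ≤ N → Dc' k n ≤ Dc k n) ∧
    (∀ k n, 1 ≤ n → n ≤ N → Dm' k n ≤ Dm k n) :=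
  stmt_12_general N hN A τ B B' hB hτ Dc Dc' Dm Dm' hDc hDc' hDm hDm'
end
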